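/- arXiv:math/0601746 — 2 statements merged into one kernel-verified Lean document; each statement's English description precedes it below -/
import Mathlib

section
/- Let C be a circuit in R^d whose affine span is all of R^d, with signed partition (C_+, C_-). Then C has exactly two triangulations, namely T_+ = { C \ {c} : c ∈ C_+ } and T_- = { C \ {c} : c ∈ C_- }. -/
/-- A triangulation of a finite point set `A ⊆ ℝ^d`: a collection of affinely
independent subsets of `A`, each affinely spanning the span of `A`, whose convex
hulls pairwise intersect in common faces and together cover `conv A`. -/
def IsTriang (d : ℕ) (A : Set (Fin d → ℝ)) (T : Set (Set (Fin d → ℝ))) : Prop :=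
  (∀ σ ∈ T, σ ⊆ A ∧ AffineIndependent ℝ ((↑) : σ → (Fin d → ℝ)) ∧
      affineSpan ℝ σ = affineSpan ℝ A) ∧
  (∀ σ ∈ T, ∀ σ' ∈ T,
      IsExtreme ℝ (convexHull ℝ σ) (convexHull ℝ σ ∩ convexHull ℝ σ') ∧
      IsExtreme ℝ (convexHull ℝ σ') (convexHull ℝ σ ∩ convexHull ℝ σ')) ∧
  (⋃ σ ∈ T, convexHull ℝ σ) = convexHull ℝ A

open Finset

variable {d k : ℕ} {c : Fin k → (Fin d → ℝ)} {lam : Fin k → ℝ}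

/-- L0 -/
lemma img_erase (hinj : Function.Injective c) (i : Fin k) :
    c '' ↑(Finset.univ.erase i) = Set.range c \ {c i} := by
  ext x
  simp only [Finset.coe_erase, Finset.coe_univ, Set.image_diff hinj, Set.image_univ,
    Set.image_singleton, Set.mem_diff, Set.mem_singleton_iff]

/-- L1 -/
lemma mem_hull_iff (hinj : Function.Injective c) (S : Finset (Fin k)) (x : Fin d → ℝ) :
    x ∈ convexHull ℝ (c '' ↑S) ↔ ∃ w : Fin k → ℝ,
      (∀ i, 0 ≤ w i) ∧ (∀ i ∉ S, w i = 0) ∧ ∑ i, w i = 1 ∧ ∑ i, w i • c i = x := by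
  constructor
  · intro hx
    rw [show c '' ↑S = ↑(S.image c) by simp [Finset.coe_image], Finset.convexHull_eq] at hx
    obtain ⟨w, hw0, hw1, hwx⟩ := hx
    classical
    refine ⟨fun i => if i ∈ S then w (c i) else 0, ?_, ?_, ?_, ?_⟩
    · intro i
      by_cases h : i ∈ S <;> simp [h]
      exact hw0 _ (Finset.mem_image_of_mem c h)
    · intro i h; simp [h]
    · rw [Finset.sum_image (fun a _ b _ h => hinj h)] at hw1
      rw [← hw1]
      simp [Finset.sum_ite_mem]
    · rw [Finset.centerMass_eq_of_sum_1 _ _ hw1,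
        Finset.sum_image (fun a _ b _ h => hinj h)] at hwx
      rw [← hwx]
      simp [Finset.sum_ite_mem]
  · rintro ⟨w, hw0, hwS, hw1, hwx⟩
    classical
    have : ∑ i ∈ S, w i = 1 := by
      rw [← hw1]
      exact (Finset.sum_subset (Finset.subset_univ S) (fun i _ hi => hwS i hi))
    refine mem_convexHull_of_exists_fintype (fun j : S => w j) (fun j : S => c j)
      (fun j => hw0 j) (by rw [Finset.sum_coe_sort S w]; exact this)
      (fun j => ⟨j, j.2, rfl⟩) ?_
    rw [Finset.sum_coe_sort S (fun j => w j • c j), ← hwx]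
    refine Finset.sum_subset (Finset.subset_univ S) ?_
    intro i _ hi; rw [hwS i hi, zero_smul]

variable (hmin : ∀ s : Set (Fin k), s ≠ Set.univ → AffineIndependent ℝ (fun j : s => c j))

/-- L2': weights supported on a proper subset giving a trivial dependence vanish. -/
lemma weights_eq_zero (hmin : ∀ s : Set (Fin k), s ≠ Set.univ → AffineIndependent ℝ (fun j : s => c j))
    (S : Finset (Fin k)) (hS : S ≠ Finset.univ) (w : Fin k → ℝ)
    (hsupp : ∀ i ∉ S, w i = 0) (h1 : ∑ i, w i = 0) (h2 : ∑ i, w i • c i = 0) : w = 0 := by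
  classical
  have hSne : (↑S : Set (Fin k)) ≠ Set.univ := by
    intro h
    exact hS (Finset.coe_injective (by simpa using h))
  have hind := hmin (↑S) hSne
  have key := affineIndependent_iff.mp hind Finset.univ (fun j => w j) ?_ ?_
  · funext i
    by_cases h : i ∈ S
    · exact key ⟨i, h⟩ (Finset.mem_univ _)
    · exact hsupp i h
  · rw [Finset.sum_set_coe (f := w), Finset.toFinset_coe, ← h1]
    exact Finset.sum_subset (Finset.subset_univ S) (fun i _ hi => hsupp i hi)
  · rw [Finset.sum_set_coe (f := fun i => w i • c i), Finset.toFinset_coe, ← h2]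
    exact Finset.sum_subset (Finset.subset_univ S)
      (fun i _ hi => by rw [hsupp i hi, zero_smul])

/-- L2: the space of affine dependences is spanned by `lam`. -/
lemma dep_eq_smul (hmin : ∀ s : Set (Fin k), s ≠ Set.univ → AffineIndependent ℝ (fun j : s => c j))
    (hlam : lam ≠ 0) (hall : ∀ i, lam i ≠ 0)
    (h0 : (∑ i, lam i) = 0) (hcc : (∑ i, lam i • c i) = 0)
    (w : Fin k → ℝ) (h1 : ∑ i, w i = 0) (h2 : ∑ i, w i • c i = 0) :
    ∃ t : ℝ, w = t • lam := by
  classical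
  rcases isEmpty_or_nonempty (Fin k) with h | h
  · exact absurd (funext fun i => (h.false i).elim) hlam
  obtain ⟨i0⟩ := h
  set t := w i0 / lam i0 with ht
  refine ⟨t, ?_⟩
  have hu : w - t • lam = 0 := by
    apply weights_eq_zero hmin (Finset.univ.erase i0)
      (fun h => by simpa using Finset.erase_ssubset (Finset.mem_univ i0) |>.ne h) _ ?_ ?_ ?_
    · intro i hi
      have : i = i0 := by
        by_contra hne
        exact hi (Finset.mem_erase.mpr ⟨hne, Finset.mem_univ _⟩)
      subst this
      simp only [Pi.sub_apply, Pi.smul_apply, smul_eq_mul, ht]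
      rw [div_mul_cancel₀ _ (hall i), sub_self]
    · simp only [Pi.sub_apply, Finset.sum_sub_distrib, h1, Pi.smul_apply, smul_eq_mul,
        ← Finset.mul_sum, h0, mul_zero, sub_zero]
    · simp only [Pi.sub_apply, sub_smul, Finset.sum_sub_distrib, h2, Pi.smul_apply,
        smul_eq_mul, mul_smul, ← Finset.smul_sum, hcc, smul_zero, sub_zero]
  have := sub_eq_zero.mp hu
  exact this

/-- L3: uniqueness of representation avoiding a common index. -/
lemma rep_unique (hmin : ∀ s : Set (Fin k), s ≠ Set.univ → AffineIndependent ℝ (fun j : s => c j))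
    (hlam : lam ≠ 0) (hall : ∀ i, lam i ≠ 0)
    (h0 : (∑ i, lam i) = 0) (hcc : (∑ i, lam i • c i) = 0)
    (i0 : Fin k) (w v : Fin k → ℝ) (hwi : w i0 = 0) (hvi : v i0 = 0)
    (hw1 : ∑ i, w i = 1) (hv1 : ∑ i, v i = 1)
    (heq : ∑ i, w i • c i = ∑ i, v i • c i) : w = v := by
  obtain ⟨t, ht⟩ := dep_eq_smul hmin hlam hall h0 hcc (w - v)
    (by simp [Finset.sum_sub_distrib, hw1, hv1])
    (by simp [sub_smul, Finset.sum_sub_distrib, heq])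
  have : t = 0 := by
    have h := congrFun ht i0
    simp only [Pi.sub_apply, hwi, hvi, sub_self, Pi.smul_apply, smul_eq_mul] at h
    rcases mul_eq_zero.mp h.symm with h' | h'
    · exact h'
    · exact absurd h' (hall i0)
  rw [this, zero_smul] at ht
  exact sub_eq_zero.mp ht

lemma exists_pos (hlam : lam ≠ 0) (h0 : (∑ i, lam i) = 0) : ∃ i, 0 < lam i := by
  by_contra h
  push_neg at h
  apply hlam
  funext i
  exact le_antisymm (h i) (by
    have := (Finset.sum_eq_zero_iff_of_nonpos (fun i _ => h i)).mp h0 i (Finset.mem_univ i)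
    simp [this])

/-- L5: hull of a subfamily is an extreme subset (S proper). -/
lemma extreme_sub (hinj : Function.Injective c)
    (hmin : ∀ s : Set (Fin k), s ≠ Set.univ → AffineIndependent ℝ (fun j : s => c j))
    (hlam : lam ≠ 0) (hall : ∀ i, lam i ≠ 0)
    (h0 : (∑ i, lam i) = 0) (hcc : (∑ i, lam i • c i) = 0)
    (S S' : Finset (Fin k)) (hS : S ≠ Finset.univ) (hsub : S' ⊆ S) :
    IsExtreme ℝ (convexHull ℝ (c '' ↑S)) (convexHull ℝ (c '' ↑S')) := by
  obtain ⟨i0, hi0⟩ : ∃ i0, i0 ∉ S := by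
    by_contra h
    push_neg at h
    exact hS (Finset.eq_univ_iff_forall.mpr h)
  constructor
  · exact convexHull_mono (Set.image_mono (Finset.coe_subset.mpr hsub))
  intro x1 h1 x2 h2 x hx hseg
  obtain ⟨a, b, ha, hb, hab, hxe⟩ := hseg
  obtain ⟨w1, hw10, hw1S, hw11, hw1x⟩ := (mem_hull_iff hinj S x1).mp h1
  obtain ⟨w2, hw20, hw2S, hw21, hw2x⟩ := (mem_hull_iff hinj S x2).mp h2
  obtain ⟨wx, hwx0, hwxS, hwx1, hwxx⟩ := (mem_hull_iff hinj S' x).mp hx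
  set u : Fin k → ℝ := a • w1 + b • w2 with hu
  have huS : ∀ i ∉ S, u i = 0 := fun i hi => by
    simp [hu, hw1S i hi, hw2S i hi]
  have hueq : wx = u := by
    apply rep_unique hmin hlam hall h0 hcc i0 _ _
      (hwxS i0 (fun h => hi0 (hsub h))) (huS i0 hi0) hwx1 ?_ ?_
    · simp [hu, Finset.sum_add_distrib, ← Finset.mul_sum, hw11, hw21, hab]
    · rw [hwxx, ← hxe, ← hw1x, ← hw2x]
      simp [hu, add_smul, mul_smul, Finset.sum_add_distrib, ← Finset.smul_sum]
  have hzero : ∀ i ∉ S', w1 i = 0 ∧ w2 i = 0 := by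
    intro i hi
    by_cases hiS : i ∈ S
    · have : u i = 0 := by rw [← hueq]; exact hwxS i hi
      simp only [hu, Pi.add_apply, Pi.smul_apply, smul_eq_mul] at this
      constructor
      · by_contra hne
        nlinarith [hw10 i, hw20 i, lt_of_le_of_ne (hw10 i) (Ne.symm hne),
          mul_nonneg hb.le (hw20 i), mul_pos ha (lt_of_le_of_ne (hw10 i) (Ne.symm hne))]
      · by_contra hne
        nlinarith [hw10 i, hw20 i, mul_nonneg ha.le (hw10 i),
          mul_pos hb (lt_of_le_of_ne (hw20 i) (Ne.symm hne))]
    · exact ⟨hw1S i hiS, hw2S i hiS⟩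
  · exact (mem_hull_iff hinj S' x1).mpr ⟨w1, hw10, fun i hi => (hzero i hi).1, hw11, hw1x⟩

/-- L6: hulls omitting two same-sign points meet in the hull omitting both. -/
lemma inter_hull (hinj : Function.Injective c)
    (hmin : ∀ s : Set (Fin k), s ≠ Set.univ → AffineIndependent ℝ (fun j : s => c j))
    (hlam : lam ≠ 0) (hall : ∀ i, lam i ≠ 0)
    (h0 : (∑ i, lam i) = 0) (hcc : (∑ i, lam i • c i) = 0)
    (i j : Fin k) (hi : 0 < lam i) (hj : 0 < lam j) :
    convexHull ℝ (c '' ↑(Finset.univ.erase i)) ∩ convexHull ℝ (c '' ↑(Finset.univ.erase j)) =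
      convexHull ℝ (c '' ↑(Finset.univ.erase i ∩ Finset.univ.erase j)) := by
  apply Set.Subset.antisymm
  · rintro x ⟨hxi, hxj⟩
    obtain ⟨w, hw0, hwS, hw1, hwx⟩ := (mem_hull_iff hinj _ x).mp hxi
    obtain ⟨v, hv0, hvS, hv1, hvx⟩ := (mem_hull_iff hinj _ x).mp hxj
    have hwi : w i = 0 := hwS i (by simp)
    have hvj : v j = 0 := hvS j (by simp)
    obtain ⟨t, ht⟩ := dep_eq_smul hmin hlam hall h0 hcc (w - v)
      (by simp [Finset.sum_sub_distrib, hw1, hv1])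
      (by simp [sub_smul, Finset.sum_sub_distrib, hwx, hvx])
    have ht0 : t = 0 := by
      have hti := congrFun ht i
      have htj := congrFun ht j
      simp only [Pi.sub_apply, hwi, hvj, Pi.smul_apply, smul_eq_mul] at hti htj
      -- hti : 0 - v i = t * lam i, htj : w j - 0 = t * lam j
      nlinarith [hv0 i, hw0 j, mul_pos hi hj]
    rw [ht0, zero_smul] at ht
    have hwv : w = v := sub_eq_zero.mp ht
    refine (mem_hull_iff hinj _ x).mpr ⟨w, hw0, ?_, hw1, hwx⟩
    intro l hl
    by_cases hli : l = i
    · exact hli ▸ hwi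
    by_cases hlj : l = j
    · rw [hwv]; exact hlj ▸ hvj
    exact absurd (Finset.mem_inter.mpr ⟨by simp [hli], by simp [hlj]⟩) hl
  · exact Set.subset_inter
      (convexHull_mono (Set.image_mono (by simp [Finset.inter_subset_left])))
      (convexHull_mono (Set.image_mono (by simp [Finset.inter_subset_right])))

/-- L7: covering. -/
lemma cover (hinj : Function.Injective c)
    (hlam : lam ≠ 0) (hall : ∀ i, lam i ≠ 0)
    (h0 : (∑ i, lam i) = 0) (hcc : (∑ i, lam i • c i) = 0)
    (x : Fin d → ℝ) (hx : x ∈ convexHull ℝ (Set.range c)) :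
    ∃ i, 0 < lam i ∧ x ∈ convexHull ℝ (Set.range c \ {c i}) := by
  classical
  have hx' : x ∈ convexHull ℝ (c '' ↑(Finset.univ : Finset (Fin k))) := by
    simpa using hx
  obtain ⟨w, hw0, -, hw1, hwx⟩ := (mem_hull_iff hinj _ x).mp hx'
  set P : Finset (Fin k) := Finset.univ.filter (fun i => 0 < lam i) with hP
  have hPne : P.Nonempty := by
    obtain ⟨i, hi⟩ := exists_pos hlam h0
    exact ⟨i, by simp [hP, hi]⟩
  obtain ⟨i0, hi0P, hmin0⟩ := P.exists_min_image (fun p => w p / lam p) hPne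
  have hi0pos : 0 < lam i0 := by simpa [hP] using hi0P
  set t := w i0 / lam i0 with htdef
  have ht0 : 0 ≤ t := div_nonneg (hw0 i0) hi0pos.le
  set v : Fin k → ℝ := w - t • lam with hv
  refine ⟨i0, hi0pos, ?_⟩
  rw [← img_erase hinj]
  refine (mem_hull_iff hinj _ x).mpr ⟨v, ?_, ?_, ?_, ?_⟩
  · intro i
    by_cases hiP : 0 < lam i
    · have := hmin0 i (by simp [hP, hiP])
      simp only [hv, Pi.sub_apply, Pi.smul_apply, smul_eq_mul, htdef]
      exact sub_nonneg.mpr ((le_div_iff₀ hiP).mp this)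
    · push_neg at hiP
      have hineg : lam i < 0 := lt_of_le_of_ne hiP (hall i)
      simp only [hv, Pi.sub_apply, Pi.smul_apply, smul_eq_mul]
      nlinarith [hw0 i]
  · intro i hi
    have : i = i0 := by
      by_contra hne
      exact hi (by simp [hne])
    rw [this]
    simp only [hv, Pi.sub_apply, Pi.smul_apply, smul_eq_mul, htdef,
      div_mul_cancel₀ _ (hall i0), sub_self]
  · simp [hv, Finset.sum_sub_distrib, hw1, ← Finset.mul_sum, h0]
  · simp [hv, sub_smul, Finset.sum_sub_distrib, hwx, mul_smul, ← Finset.smul_sum, hcc]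

/-- c i is in the affine span of the others. -/
lemma mem_span_erase (hall : ∀ i, lam i ≠ 0)
    (h0 : (∑ i, lam i) = 0) (hcc : (∑ i, lam i • c i) = 0) (i : Fin k) :
    c i ∈ affineSpan ℝ (c '' ↑(Finset.univ.erase i)) := by
  classical
  set s : Set (Fin k) := ↑(Finset.univ.erase i) with hs
  have hsum_lam : ∑ j ∈ Finset.univ.erase i, lam j = -lam i := by
    have := Finset.sum_erase_add Finset.univ lam (Finset.mem_univ i)
    linarith [h0, this]
  have hsum_c : ∑ j ∈ Finset.univ.erase i, lam j • c j = -(lam i • c i) := by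
    have := Finset.sum_erase_add Finset.univ (fun j => lam j • c j) (Finset.mem_univ i)
    rw [hcc] at this
    linear_combination (norm := module) this
  set w : Fin k → ℝ := fun j => -lam j / lam i with hw
  have hw1 : ∑ j : s, w j = 1 := by
    rw [Finset.sum_set_coe (f := w), Finset.toFinset_coe, hw]
    simp only [neg_div]
    rw [Finset.sum_neg_distrib, ← Finset.sum_div, hsum_lam, neg_div, neg_neg, div_self (hall i)]
  have hcomb : (Finset.univ : Finset s).affineCombination ℝ (fun j : s => c j) (fun j => w j)
      = c i := by
    rw [Finset.affineCombination_eq_linear_combination _ _ _ hw1]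
    rw [Finset.sum_set_coe (f := fun j => w j • c j), Finset.toFinset_coe]
    have : ∑ j ∈ Finset.univ.erase i, w j • c j
        = (-1 / lam i) • ∑ j ∈ Finset.univ.erase i, lam j • c j := by
      rw [Finset.smul_sum]
      apply Finset.sum_congr rfl
      intro j _
      rw [smul_smul, hw]
      congr 1
      field_simp
    rw [this, hsum_c, smul_neg, smul_smul]
    rw [div_mul_cancel₀]
    · rw [neg_one_smul, neg_neg]
    · exact hall i
  have := affineCombination_mem_affineSpan hw1 (fun j : s => c j)
  rw [hcomb] at this
  rwa [← Set.image_eq_range c s] at this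

lemma span_erase (hall : ∀ i, lam i ≠ 0)
    (h0 : (∑ i, lam i) = 0) (hcc : (∑ i, lam i • c i) = 0) (i : Fin k) :
    affineSpan ℝ (c '' ↑(Finset.univ.erase i)) = affineSpan ℝ (Set.range c) := by
  apply le_antisymm
  · exact affineSpan_mono ℝ (by rintro y ⟨j, -, rfl⟩; exact ⟨j, rfl⟩)
  · rw [affineSpan_le]
    rintro y ⟨j, rfl⟩
    by_cases hj : j = i
    · subst hj
      exact mem_span_erase hall h0 hcc j
    · exact subset_affineSpan ℝ _ ⟨j, by simp [hj], rfl⟩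

/-- affine independence of the coercion family on `c '' s`. -/
lemma indep_image (hmin : ∀ s : Set (Fin k), s ≠ Set.univ → AffineIndependent ℝ (fun j : s => c j))
    (s : Set (Fin k)) (hs : s ≠ Set.univ) :
    AffineIndependent ℝ ((↑) : (c '' s) → (Fin d → ℝ)) := by
  have h := (hmin s hs).range
  have : Set.range (fun j : s => c j) = c '' s := (Set.image_eq_range c s).symm
  rw [this] at h
  exact h

lemma k_eq (hinj : Function.Injective c)
    (hmin : ∀ s : Set (Fin k), s ≠ Set.univ → AffineIndependent ℝ (fun j : s => c j))
    (hlam : lam ≠ 0) (hall : ∀ i, lam i ≠ 0)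
    (h0 : (∑ i, lam i) = 0) (hcc : (∑ i, lam i • c i) = 0)
    (hspan : affineSpan ℝ (Set.range c) = ⊤) : k = d + 2 := by
  classical
  obtain ⟨i0, -⟩ := exists_pos hlam h0
  set s : Set (Fin k) := ↑(Finset.univ.erase i0) with hs
  have hsne : s ≠ Set.univ := by
    intro h
    have : i0 ∈ s := h ▸ Set.mem_univ i0
    simp [hs] at this
  have hind := hmin s hsne
  have htop : affineSpan ℝ (Set.range (fun j : s => c j)) = ⊤ := by
    rw [← Set.image_eq_range c s, hs, span_erase hall h0 hcc, hspan]
  have hcard := hind.affineSpan_eq_top_iff_card_eq_finrank_add_one.mp htop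
  rw [Module.finrank_fin_fun] at hcard
  have hc2 : Fintype.card s = k - 1 := by
    rw [← Nat.card_eq_fintype_card, Nat.card_coe_set_eq, hs, Set.ncard_coe_finset,
      Finset.card_erase_of_mem (Finset.mem_univ i0), Finset.card_univ, Fintype.card_fin]
  have hk1 : 1 ≤ k := i0.pos
  omega

lemma erase_ne_univ (i : Fin k) : (↑(Finset.univ.erase i) : Set (Fin k)) ≠ Set.univ := by
  intro h
  have : i ∈ (↑(Finset.univ.erase i) : Set (Fin k)) := h ▸ Set.mem_univ i
  simp at this

/-- MAIN1: forward direction. -/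
lemma isTriang_pos (hinj : Function.Injective c)
    (hmin : ∀ s : Set (Fin k), s ≠ Set.univ → AffineIndependent ℝ (fun j : s => c j))
    (hlam : lam ≠ 0) (hall : ∀ i, lam i ≠ 0)
    (h0 : (∑ i, lam i) = 0) (hcc : (∑ i, lam i • c i) = 0) :
    IsTriang d (Set.range c) {s | ∃ i, 0 < lam i ∧ s = Set.range c \ {c i}} := by
  refine ⟨?_, ?_, ?_⟩
  · rintro σ ⟨i, hi, rfl⟩
    rw [← img_erase hinj i]
    exact ⟨fun y ⟨j, _, hj⟩ => ⟨j, hj⟩,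
      indep_image hmin _ (erase_ne_univ i), span_erase hall h0 hcc i⟩
  · rintro σ ⟨i, hi, rfl⟩ σ' ⟨j, hj, rfl⟩
    by_cases hij : i = j
    · subst hij
      rw [Set.inter_self]
      exact ⟨⟨subset_rfl, fun x1 h1 x2 h2 x _ _ => h1⟩,
        ⟨subset_rfl, fun x1 h1 x2 h2 x _ _ => h1⟩⟩
    · rw [← img_erase hinj i, ← img_erase hinj j,
        inter_hull hinj hmin hlam hall h0 hcc i j hi hj]
      exact ⟨extreme_sub hinj hmin hlam hall h0 hcc _ _
          (fun h => erase_ne_univ i (by rw [h]; simp))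
          (Finset.inter_subset_left),
        extreme_sub hinj hmin hlam hall h0 hcc _ _
          (fun h => erase_ne_univ j (by rw [h]; simp))
          (Finset.inter_subset_right)⟩
  · apply Set.Subset.antisymm
    · refine Set.iUnion₂_subset ?_
      rintro σ ⟨i, hi, rfl⟩
      exact convexHull_mono Set.diff_subset
    · intro x hx
      obtain ⟨i, hi, hxi⟩ := cover hinj hlam hall h0 hcc x hx
      exact Set.mem_iUnion₂.mpr ⟨Set.range c \ {c i}, ⟨i, hi, rfl⟩, hxi⟩

/-- L9: every simplex of a triangulation omits exactly one point. -/
lemma simplex_form (hinj : Function.Injective c)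
    (hmin : ∀ s : Set (Fin k), s ≠ Set.univ → AffineIndependent ℝ (fun j : s => c j))
    (hlam : lam ≠ 0) (hall : ∀ i, lam i ≠ 0)
    (h0 : (∑ i, lam i) = 0) (hcc : (∑ i, lam i • c i) = 0)
    (hspan : affineSpan ℝ (Set.range c) = ⊤)
    (T : Set (Set (Fin d → ℝ))) (hT : IsTriang d (Set.range c) T)
    (σ : Set (Fin d → ℝ)) (hσ : σ ∈ T) : ∃ i, σ = Set.range c \ {c i} := by
  classical
  obtain ⟨hsub, hind, hsp⟩ := hT.1 σ hσ
  have hfin : σ.Finite := (Set.finite_range c).subset hsub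
  haveI := hfin.fintype
  have htop : affineSpan ℝ (Set.range ((↑) : σ → (Fin d → ℝ))) = ⊤ := by
    rw [Subtype.range_coe, hsp, hspan]
  have hcard := hind.affineSpan_eq_top_iff_card_eq_finrank_add_one.mp htop
  rw [Module.finrank_fin_fun] at hcard
  have hk := k_eq hinj hmin hlam hall h0 hcc hspan
  set S : Finset (Fin k) := Finset.univ.filter (fun i => c i ∈ σ) with hS
  have himg : c '' ↑S = σ := by
    ext y
    constructor
    · rintro ⟨j, hj, rfl⟩
      simpa [hS] using hj
    · intro hy
      obtain ⟨j, rfl⟩ := hsub hy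
      exact ⟨j, by simp [hS, hy], rfl⟩
  have hScard : S.card = d + 1 := by
    have h1 : (c '' ↑S).ncard = S.card := by
      rw [Set.ncard_image_of_injective _ hinj, Set.ncard_coe_finset]
    rw [himg] at h1
    have h2 : σ.ncard = d + 1 := by
      rw [← Nat.card_coe_set_eq, Nat.card_eq_fintype_card, hcard]
    omega
  have hcompl : Sᶜ.card = 1 := by
    rw [Finset.card_compl, Fintype.card_fin]
    omega
  obtain ⟨i, hi⟩ := Finset.card_eq_one.mp hcompl
  have hSe : S = Finset.univ.erase i := by
    rw [← compl_compl S, hi, Finset.compl_singleton]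
  exact ⟨i, by rw [← himg, hSe, img_erase hinj]⟩

/-- L11: no mixed signs. -/
lemma no_mixed (hinj : Function.Injective c)
    (hmin : ∀ s : Set (Fin k), s ≠ Set.univ → AffineIndependent ℝ (fun j : s => c j))
    (hlam : lam ≠ 0) (hall : ∀ i, lam i ≠ 0)
    (h0 : (∑ i, lam i) = 0) (hcc : (∑ i, lam i • c i) = 0)
    (T : Set (Set (Fin d → ℝ))) (hT : IsTriang d (Set.range c) T)
    (i j : Fin k) (hi : 0 < lam i) (hj : lam j < 0)
    (hp : ∃ p, p ≠ i ∧ 0 < lam p)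
    (hσ : Set.range c \ {c i} ∈ T) (hσ' : Set.range c \ {c j} ∈ T) : False := by
  classical
  obtain ⟨p, hpi, hppos⟩ := hp
  have hij : i ≠ j := fun h => by rw [h] at hi; linarith
  set P : Finset (Fin k) := Finset.univ.filter (fun q => 0 < lam q) with hP
  have hiP : i ∈ P := by simp [hP, hi]
  set L : ℝ := ∑ q ∈ P, lam q with hL
  have hLpos : 0 < L :=
    Finset.sum_pos (fun q hq => (Finset.mem_filter.mp hq).2) ⟨i, hiP⟩
  set v : Fin k → ℝ := fun q => if 0 < lam q then lam q / L else 0 with hv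
  set u : Fin k → ℝ := fun q => if lam q < 0 then -lam q / L else 0 with hu
  have hv0 : ∀ q, 0 ≤ v q := fun q => by
    by_cases h : 0 < lam q <;> simp [hv, h]
    exact div_nonneg h.le hLpos.le
  have hu0 : ∀ q, 0 ≤ u q := fun q => by
    by_cases h : lam q < 0 <;> simp [hu, h]
    exact div_nonneg (neg_nonneg.mpr h.le) hLpos.le
  have hvsum : ∑ q, v q = 1 := by
    rw [hv, ← Finset.sum_filter, ← hP, ← Finset.sum_div, ← hL, div_self hLpos.ne']
  have hvu : ∀ q, v q - u q = lam q / L := by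
    intro q
    rcases lt_or_gt_of_ne (hall q) with h | h
    · simp [hv, hu, h, not_lt.mpr h.le, neg_div, lt_asymm h]
    · simp [hv, hu, h, not_lt.mpr h.le, lt_asymm h]
  have husum : ∑ q, u q = 1 := by
    have : ∑ q, (v q - u q) = 0 := by
      rw [Finset.sum_congr rfl (fun q _ => hvu q), ← Finset.sum_div, h0, zero_div]
    rw [Finset.sum_sub_distrib, hvsum] at this
    linarith
  set x : Fin d → ℝ := ∑ q, v q • c q with hx
  have hxu : ∑ q, u q • c q = x := by
    have : ∑ q, (v q - u q) • c q = 0 := by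
      rw [Finset.sum_congr rfl (fun q _ => by rw [hvu q, div_eq_inv_mul, mul_smul])]
      rw [← Finset.smul_sum, hcc, smul_zero]
    simp only [sub_smul, Finset.sum_sub_distrib] at this
    rw [hx]
    exact (sub_eq_zero.mp this).symm
  have hxσ' : x ∈ convexHull ℝ (Set.range c \ {c j}) := by
    rw [← img_erase hinj j]
    refine (mem_hull_iff hinj _ x).mpr ⟨v, hv0, ?_, hvsum, rfl⟩
    intro q hq
    have : q = j := by by_contra hne; exact hq (by simp [hne])
    subst this
    simp [hv, lt_asymm hj]
  have hxσ : x ∈ convexHull ℝ (Set.range c \ {c i}) := by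
    rw [← img_erase hinj i]
    refine (mem_hull_iff hinj _ x).mpr ⟨u, hu0, ?_, husum, hxu⟩
    intro q hq
    have : q = i := by by_contra hne; exact hq (by simp [hne])
    subst this
    simp [hu, lt_asymm hi]
  have hE := (hT.2.1 _ hσ _ hσ').2
  set a : ℝ := lam i / L with ha
  have hvi : v i = a := by simp [hv, hi, ha]
  have hapos : 0 < a := div_pos hi hLpos
  have hLi : 0 < L - lam i := by
    have herase : ∑ q ∈ P.erase i, lam q + lam i = L :=
      Finset.sum_erase_add P lam hiP
    have hpP : p ∈ P.erase i := Finset.mem_erase.mpr ⟨hpi, by simp [hP, hppos]⟩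
    have : 0 < ∑ q ∈ P.erase i, lam q :=
      Finset.sum_pos (fun q hq => (Finset.mem_filter.mp (Finset.mem_of_mem_erase hq)).2)
        ⟨p, hpP⟩
    linarith
  set b : ℝ := 1 - a with hb
  have hbpos : 0 < b := by
    rw [hb, ha]
    rw [sub_pos, div_lt_one hLpos]
    linarith
  set yw : Fin k → ℝ := fun q => if q = i then 0 else v q / b with hyw
  set y : Fin d → ℝ := ∑ q, yw q • c q with hy
  have hywsum : ∑ q, yw q = 1 := by
    have : ∀ q, yw q = v q / b - (if q = i then v i / b else 0) := by
      intro q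
      by_cases h : q = i
      · subst h; simp [hyw]
      · simp [hyw, h]
    rw [Finset.sum_congr rfl (fun q _ => this q), Finset.sum_sub_distrib,
      ← Finset.sum_div, hvsum, Finset.sum_ite_eq' Finset.univ i (fun _ => v i / b)]
    simp only [Finset.mem_univ, if_true, hvi]
    rw [hb]
    field_simp
    exact div_self (ne_of_gt (by linarith))
  have hyσ' : y ∈ convexHull ℝ (Set.range c \ {c j}) := by
    rw [← img_erase hinj j]
    refine (mem_hull_iff hinj _ y).mpr ⟨yw, ?_, ?_, hywsum, rfl⟩
    · intro q
      by_cases h : q = i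
      · simp [hyw, h]
      · simp only [hyw, h, if_false]
        exact div_nonneg (hv0 q) hbpos.le
    · intro q hq
      have : q = j := by by_contra hne; exact hq (by simp [hne])
      subst this
      simp [hyw, hij.symm, hv, lt_asymm hj]
  have hciσ' : c i ∈ convexHull ℝ (Set.range c \ {c j}) := by
    apply subset_convexHull
    exact ⟨⟨i, rfl⟩, fun h => hij (hinj h)⟩
  have hseg : x ∈ openSegment ℝ (c i) y := by
    refine ⟨a, b, hapos, hbpos, by rw [hb]; ring, ?_⟩
    rw [hy, Finset.smul_sum]
    have hterm : ∀ q, b • yw q • c q = (if q = i then (0:ℝ) else v q) • c q := by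
      intro q
      by_cases h : q = i
      · simp [hyw, h]
      · simp only [hyw, h, if_false, smul_smul]
        rw [mul_div_cancel₀ _ hbpos.ne']
    rw [Finset.sum_congr rfl (fun q _ => hterm q)]
    have h2 : ∑ q, (if q = i then (0:ℝ) else v q) • c q
        = ∑ q ∈ Finset.univ.erase i, v q • c q := by
      rw [← Finset.sum_erase (f := fun q => (if q = i then (0:ℝ) else v q) • c q)
        Finset.univ (a := i) (by simp)]
      apply Finset.sum_congr rfl
      intro q hq
      rw [if_neg (Finset.mem_erase.mp hq).1]
    rw [h2, hx, ← Finset.add_sum_erase Finset.univ (fun q => v q • c q) (Finset.mem_univ i),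
      ← hvi]
  have hcimem := (hE.2 hciσ' hyσ' ⟨hxσ, hxσ'⟩ hseg).1
  have hciσ : c i ∈ convexHull ℝ (Set.range c \ {c i}) := hcimem
  rw [← img_erase hinj i] at hciσ
  obtain ⟨w, hw0, hwS, hw1, hwx⟩ := (mem_hull_iff hinj _ (c i)).mp hciσ
  have hwi : w i = 0 := hwS i (by simp)
  set dl : Fin k → ℝ := fun q => if q = i then 1 else 0 with hdl
  have hside1 : ∑ q, (w - dl) q = 0 := by
    rw [Pi.sub_def]
    rw [Finset.sum_sub_distrib, hw1, hdl]
    rw [Finset.sum_ite_eq' Finset.univ i (fun _ => (1:ℝ))]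
    simp
  have hside2 : ∑ q, (w - dl) q • c q = 0 := by
    rw [Pi.sub_def]
    simp only [sub_smul, Finset.sum_sub_distrib, hwx, hdl, ite_smul, one_smul, zero_smul]
    rw [Finset.sum_ite_eq' Finset.univ i (fun q => c q)]
    simp
  obtain ⟨t, ht⟩ := dep_eq_smul hmin hlam hall h0 hcc (w - dl) hside1 hside2
  have hti := congrFun ht i
  have htp := congrFun ht p
  simp only [Pi.sub_apply, hdl, hwi, if_pos rfl, if_neg hpi, if_true, Pi.smul_apply,
    smul_eq_mul, sub_zero, zero_sub] at hti htp
  nlinarith [hw0 p, hi, hppos, mul_pos hi hppos, mul_nonneg (hw0 p) hi.le]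

lemma three_le (hinj : Function.Injective c)
    (hmin : ∀ s : Set (Fin k), s ≠ Set.univ → AffineIndependent ℝ (fun j : s => c j))
    (hlam : lam ≠ 0) (hall : ∀ i, lam i ≠ 0)
    (h0 : (∑ i, lam i) = 0) (hcc : (∑ i, lam i • c i) = 0)
    (hspan : affineSpan ℝ (Set.range c) = ⊤) : 3 ≤ k := by
  have hk := k_eq hinj hmin hlam hall h0 hcc hspan
  by_contra hlt
  push_neg at hlt
  have hd : d = 0 := by omega
  subst hd
  have hk2 : k = 2 := by omega
  have hab : c ⟨0, by omega⟩ = c ⟨1, by omega⟩ := funext fun x => x.elim0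
  have := hinj hab
  simp [Fin.mk.injEq] at this

/-- L12: completeness. -/
lemma complete_pos (hinj : Function.Injective c)
    (hmin : ∀ s : Set (Fin k), s ≠ Set.univ → AffineIndependent ℝ (fun j : s => c j))
    (hlam : lam ≠ 0) (hall : ∀ i, lam i ≠ 0)
    (h0 : (∑ i, lam i) = 0) (hcc : (∑ i, lam i • c i) = 0)
    (hspan : affineSpan ℝ (Set.range c) = ⊤)
    (T : Set (Set (Fin d → ℝ))) (hT : IsTriang d (Set.range c) T)
    (hposT : ∀ σ ∈ T, ∃ p, 0 < lam p ∧ σ = Set.range c \ {c p})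
    (i0 : Fin k) (hi0 : 0 < lam i0) : Set.range c \ {c i0} ∈ T := by
  classical
  have hk := k_eq hinj hmin hlam hall h0 hcc hspan
  have hkR : (0:ℝ) < (k:ℝ) - 1 := by
    have : (2:ℝ) ≤ (k:ℝ) := by exact_mod_cast (by omega : 2 ≤ k)
    linarith
  set r : ℝ := ((k:ℝ) - 1)⁻¹ with hr
  set μ : Fin k → ℝ := fun q => if q = i0 then 0 else r with hμ
  have hμ0 : ∀ q, 0 ≤ μ q := fun q => by
    by_cases h : q = i0 <;> simp [hμ, h]
    positivity
  have hμsum : ∑ q, μ q = 1 := by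
    have h1 : ∑ q, μ q = ∑ q ∈ Finset.univ.erase i0, r := by
      rw [← Finset.sum_erase (f := fun q => if q = i0 then (0:ℝ) else r)
        Finset.univ (a := i0) (by simp)]
      refine Finset.sum_congr rfl (fun q hq => ?_)
      rw [if_neg (Finset.mem_erase.mp hq).1]
    rw [h1, Finset.sum_const, Finset.card_erase_of_mem (Finset.mem_univ i0),
      Finset.card_univ, Fintype.card_fin, nsmul_eq_mul, Nat.cast_sub (by omega : 1 ≤ k),
      Nat.cast_one, hr]
    field_simp
  set x : Fin d → ℝ := ∑ q, μ q • c q with hx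
  have hxhull : x ∈ convexHull ℝ (Set.range c) := by
    have : x ∈ convexHull ℝ (c '' ↑(Finset.univ : Finset (Fin k))) :=
      (mem_hull_iff hinj _ x).mpr ⟨μ, hμ0, fun q hq => absurd (Finset.mem_univ q) hq,
        hμsum, rfl⟩
    simpa using this
  rw [← hT.2.2] at hxhull
  obtain ⟨σ, hσT, hxσ⟩ := Set.mem_iUnion₂.mp hxhull
  obtain ⟨p, hppos, rfl⟩ := hposT σ hσT
  rw [← img_erase hinj p] at hxσ
  obtain ⟨w, hw0, hwS, hw1, hwx⟩ := (mem_hull_iff hinj _ x).mp hxσ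
  have hwp : w p = 0 := hwS p (by simp)
  by_cases hp : p = i0
  · subst hp; exact hσT
  exfalso
  obtain ⟨t, ht⟩ := dep_eq_smul hmin hlam hall h0 hcc (w - μ)
    (by rw [Pi.sub_def, Finset.sum_sub_distrib, hw1, hμsum, sub_self])
    (by rw [Pi.sub_def]; simp only [sub_smul, Finset.sum_sub_distrib, hwx, ← hx, sub_self])
  have htp := congrFun ht p
  have hti0 := congrFun ht i0
  simp only [Pi.sub_apply, hμ, hwp, if_neg hp, if_pos rfl, if_true, Pi.smul_apply,
    smul_eq_mul, sub_zero, zero_sub] at htp hti0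
  -- htp : 0 - r = t * lam p, hti0 : w i0 - 0 = t * lam i0
  have hrpos : 0 < r := by rw [hr]; positivity
  have h1 : t < 0 := by
    by_contra h
    push_neg at h
    nlinarith [mul_nonneg h hppos.le]
  nlinarith [hw0 i0, mul_neg_of_neg_of_pos h1 hi0]

/-- MAIN2: a triangulation containing one positive simplex is `T₊`. -/
lemma eq_pos (hinj : Function.Injective c)
    (hmin : ∀ s : Set (Fin k), s ≠ Set.univ → AffineIndependent ℝ (fun j : s => c j))
    (hlam : lam ≠ 0) (hall : ∀ i, lam i ≠ 0)
    (h0 : (∑ i, lam i) = 0) (hcc : (∑ i, lam i • c i) = 0)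
    (hspan : affineSpan ℝ (Set.range c) = ⊤)
    (T : Set (Set (Fin d → ℝ))) (hT : IsTriang d (Set.range c) T)
    (i1 : Fin k) (hi1 : 0 < lam i1) (hmem : Set.range c \ {c i1} ∈ T) :
    T = {s | ∃ i, 0 < lam i ∧ s = Set.range c \ {c i}} := by
  classical
  have hlam' : (-lam) ≠ 0 := fun h => hlam (by simpa using congrArg Neg.neg h)
  have hall' : ∀ i, (-lam) i ≠ 0 := fun i => by simpa using hall i
  have h0' : (∑ i, (-lam) i) = 0 := by simp [h0]
  have hcc' : (∑ i, (-lam) i • c i) = 0 := by simp [hcc]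
  have hposT : ∀ σ ∈ T, ∃ p, 0 < lam p ∧ σ = Set.range c \ {c p} := by
    intro σ hσ
    obtain ⟨i, rfl⟩ := simplex_form hinj hmin hlam hall h0 hcc hspan T hT σ hσ
    rcases lt_or_gt_of_ne (hall i) with hneg | hpos
    · exfalso
      have h3 := three_le hinj hmin hlam hall h0 hcc hspan
      obtain ⟨q, hq1, hqi⟩ : ∃ q, q ≠ i1 ∧ q ≠ i := by
        by_contra hcon
        push_neg at hcon
        have hsub : (Finset.univ : Finset (Fin k)) ⊆ {i1, i} := by
          intro q _
          rcases eq_or_ne q i1 with rfl | hq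
          · simp
          · simp [hcon q hq]
        have := Finset.card_le_card hsub
        rw [Finset.card_univ, Fintype.card_fin] at this
        have h2 := Finset.card_insert_le i1 ({i} : Finset (Fin k))
        simp at h2 this
        omega
      rcases lt_or_gt_of_ne (hall q) with hqneg | hqpos
      · exact no_mixed (lam := -lam) hinj hmin hlam' hall' h0' hcc' T hT i i1
          (by simpa using hneg) (by simpa using hi1)
          ⟨q, hqi, by simpa using hqneg⟩ hσ hmem
      · exact no_mixed hinj hmin hlam hall h0 hcc T hT i1 i hi1 hneg
          ⟨q, hq1, hqpos⟩ hmem hσ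
    · exact ⟨i, hpos, rfl⟩
  apply Set.Subset.antisymm
  · intro σ hσ
    exact hposT σ hσ
  · rintro σ ⟨i, hip, rfl⟩
    exact complete_pos hinj hmin hlam hall h0 hcc hspan T hT hposT i hip


/-- A full-dimensional circuit `C` in ℝ^d with signed partition
`(C₊, C₋)` has exactly two triangulations, `T₊ = {C \ {c} : c ∈ C₊}` and
`T₋ = {C \ {c} : c ∈ C₋}`. -/
theorem circuit_two_triangulations (d k : ℕ) (c : Fin k → (Fin d → ℝ))
    (hinj : Function.Injective c)
    (hmin : ∀ s : Set (Fin k), s ≠ Set.univ → AffineIndependent ℝ (fun j : s => c j))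
    (lam : Fin k → ℝ) (hlam : lam ≠ 0) (h0 : (∑ i, lam i) = 0)
    (hc : (∑ i, lam i • c i) = 0) (hall : ∀ i, lam i ≠ 0)
    (hspan : affineSpan ℝ (Set.range c) = ⊤) :
    {T | IsTriang d (Set.range c) T} =
      { {s | ∃ i, 0 < lam i ∧ s = Set.range c \ {c i}},
        {s | ∃ i, lam i < 0 ∧ s = Set.range c \ {c i}} } := by
  
  classical
  have hlam' : (-lam) ≠ 0 := fun h => hlam (by simpa using congrArg Neg.neg h)
  have hall' : ∀ i, (-lam) i ≠ 0 := fun i => by simpa using hall i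
  have h0' : (∑ i, (-lam) i) = 0 := by simp [h0]
  have hcc' : (∑ i, (-lam) i • c i) = 0 := by simp [hc]
  have hsetneg : {s | ∃ i, 0 < (-lam) i ∧ s = Set.range c \ {c i}}
      = {s | ∃ i, lam i < 0 ∧ s = Set.range c \ {c i}} := by
    ext s
    simp [neg_pos]
  ext T
  simp only [Set.mem_setOf_eq, Set.mem_insert_iff, Set.mem_singleton_iff]
  constructor
  · intro hT
    obtain ⟨i0, hi0⟩ := exists_pos hlam h0
    have hx : c i0 ∈ convexHull ℝ (Set.range c) :=
      subset_convexHull ℝ _ ⟨i0, rfl⟩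
    rw [← hT.2.2] at hx
    obtain ⟨σ0, hσ0T, -⟩ := Set.mem_iUnion₂.mp hx
    obtain ⟨i1, rfl⟩ := simplex_form hinj hmin hlam hall h0 hc hspan T hT σ0 hσ0T
    rcases lt_or_gt_of_ne (hall i1) with hneg | hpos
    · right
      have := eq_pos (lam := -lam) hinj hmin hlam' hall' h0' hcc' hspan T hT i1
        (by simpa using hneg) hσ0T
      rw [this, hsetneg]
    · left
      exact eq_pos hinj hmin hlam hall h0 hc hspan T hT i1 hpos hσ0T
  · intro h
    rcases h with rfl | rfl
    · exact isTriang_pos hinj hmin hlam hall h0 hc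
    · rw [← hsetneg]
      exact isTriang_pos hinj hmin hlam' hall' h0' hcc'
end

section
/- Let A be the 6-point planar configuration with homogeneous coordinates a_1=(4,0,0), a_2=(0,4,0), a_3=(0,0,4), a_4=(2,1,1), a_5=(1,2,1), a_6=(1,1,2) (in the plane x_1+x_2+x_3=4). Then T_1 = {124, 235, 136, 245, 356, 146, 456} is a triangulation of A that is not regular: there is no w: A → R whose lower envelope induces T_1. -/
/-- The regular subdivision of `A` induced by a lifting function `w`: cells are the
projections of the lower facets of the lifted point set `{(a, w a) : a ∈ A}`,
i.e. the sets of points of `A` at which some affine functional lying (weakly) below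
`w` on all of `A` is attained, and which affinely span the span of `A`. -/
def regularSubdiv (d : ℕ) (A : Set (Fin d → ℝ)) (w : (Fin d → ℝ) → ℝ) :
    Set (Set (Fin d → ℝ)) :=
  {σ | ∃ f : (Fin d → ℝ) →ᵃ[ℝ] ℝ, (∀ a ∈ A, f a ≤ w a) ∧
      σ = {a ∈ A | f a = w a} ∧ affineSpan ℝ σ = affineSpan ℝ A}

/-- The six-point configuration of Example 1.2 (projected to the plane by dropping
the redundant coordinate `x₃ = 4 - x₁ - x₂`). -/
noncomputable def moaePts : Fin 6 → (Fin 2 → ℝ) :=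
  ![![4, 0], ![0, 4], ![0, 0], ![2, 1], ![1, 2], ![1, 1]]

/-- The triangulation T₁ = {124, 235, 136, 245, 356, 146, 456}. -/
noncomputable def moaeT1 : Set (Set (Fin 2 → ℝ)) :=
  { moaePts '' {0, 1, 3}, moaePts '' {1, 2, 4}, moaePts '' {0, 2, 5},
    moaePts '' {1, 3, 4}, moaePts '' {2, 4, 5}, moaePts '' {0, 3, 5},
    moaePts '' {3, 4, 5} }


open Set

abbrev E2 := Fin 2 → ℝ

/-- explicit affine functional on the plane -/
noncomputable def aff (u v c : ℝ) : E2 →ᵃ[ℝ] ℝ where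
  toFun := fun x => u * x 0 + v * x 1 + c
  linear :=
  { toFun := fun x => u * x 0 + v * x 1
    map_add' := by intro x y; simp [Pi.add_apply]; ring
    map_smul' := by intro r x; simp [Pi.smul_apply, smul_eq_mul]; ring }
  map_vadd' := by intro p v'; simp [Pi.add_apply]; ring

@[simp] lemma aff_apply (u v c : ℝ) (x : E2) : aff u v c x = u * x 0 + v * x 1 + c := rfl

/-- value of an affine map on an affine combination of three points -/
lemma aff_comb3 {V : Type*} [AddCommGroup V] [Module ℝ V]
    (ℓ : V →ᵃ[ℝ] ℝ) (α β γ : ℝ) (a b c : V) (hs : α + β + γ = 1) :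
    ℓ (α • a + β • b + γ • c) = α * ℓ a + β * ℓ b + γ * ℓ c := by
  have h : α • a + β • b + γ • c = (α • (a - c) + β • (b - c)) +ᵥ c := by
    have : γ = 1 - α - β := by linarith
    subst this
    simp [smul_sub, sub_smul, one_smul]
    abel
  rw [h, AffineMap.map_vadd]
  have l1 : ℓ.linear (a - c) = ℓ a - ℓ c := by
    have := ℓ.linearMap_vsub a c; simpa [vsub_eq_sub] using this
  have l2 : ℓ.linear (b - c) = ℓ b - ℓ c := by
    have := ℓ.linearMap_vsub b c; simpa [vsub_eq_sub] using this
  simp [map_add, map_smul, l1, l2, vadd_eq_add, smul_eq_mul]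
  have : γ = 1 - α - β := by linarith
  subst this
  ring

/-- membership in a triangle from explicit convex coefficients -/
lemma mem_tri {V : Type*} [AddCommGroup V] [Module ℝ V]
    {a b c x : V} {α β γ : ℝ} (h0 : 0 ≤ α) (h1 : 0 ≤ β) (h2 : 0 ≤ γ)
    (hs : α + β + γ = 1) (hx : x = α • a + β • b + γ • c) :
    x ∈ convexHull ℝ ({a, b, c} : Set V) := by
  have := (convex_convexHull ℝ ({a, b, c} : Set V)).sum_mem
    (t := (Finset.univ : Finset (Fin 3))) (w := ![α, β, γ]) (z := ![a, b, c])
    (by intro i _; fin_cases i <;> simpa)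
    (by simp [Fin.sum_univ_three]; linarith)
    (by intro i _; fin_cases i <;>
        · apply subset_convexHull; simp)
  rw [Fin.sum_univ_three] at this
  simpa [hx] using this

/-- representation of a point in a triangle -/
lemma tri_rep {V : Type*} [AddCommGroup V] [Module ℝ V]
    {a b c x : V} (hx : x ∈ convexHull ℝ ({a, b, c} : Set V)) :
    ∃ α β γ : ℝ, 0 ≤ α ∧ 0 ≤ β ∧ 0 ≤ γ ∧ α + β + γ = 1 ∧ x = α • a + β • b + γ • c := by
  rw [convexHull_insert (by simp : ({b, c} : Set V).Nonempty)] at hx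
  obtain ⟨y, hy, hxy⟩ := Set.mem_iUnion₂.1 hx
  obtain rfl : y = a := Set.mem_singleton_iff.1 hy
  obtain ⟨z, hz, hxz⟩ := Set.mem_iUnion₂.1 hxy
  rw [convexHull_pair] at hz
  obtain ⟨u, v, hu, hv, huv, rfl⟩ := hz
  obtain ⟨p, q, hp, hq, hpq, rfl⟩ := hxz
  exact ⟨p, q * u, q * v, hp, mul_nonneg hq hu, mul_nonneg hq hv, by nlinarith,
    by rw [smul_add, smul_smul, smul_smul, add_assoc]⟩

/-- face of a triangle cut out by a supporting functional -/
lemma face_sub {a b c : E2} {ℓ : E2 →ᵃ[ℝ] ℝ} {r : ℝ}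
    (ha : ℓ a ≤ r) (hb : ℓ b ≤ r) (hc : ℓ c ≤ r) {τ : Set E2}
    (ea : ℓ a = r → a ∈ τ) (eb : ℓ b = r → b ∈ τ) (ec : ℓ c = r → c ∈ τ) :
    ∀ x ∈ convexHull ℝ ({a, b, c} : Set E2), ℓ x = r → x ∈ convexHull ℝ τ := by
  intro x hx hxr
  obtain ⟨α, β, γ, h0, h1, h2, hs, rfl⟩ := tri_rep hx
  rw [aff_comb3 ℓ α β γ a b c hs] at hxr
  have e : α * (r - ℓ a) + β * (r - ℓ b) + γ * (r - ℓ c) = 0 := by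
    linear_combination r * hs - hxr
  have n1 : 0 ≤ α * (r - ℓ a) := mul_nonneg h0 (by linarith)
  have n2 : 0 ≤ β * (r - ℓ b) := mul_nonneg h1 (by linarith)
  have n3 : 0 ≤ γ * (r - ℓ c) := mul_nonneg h2 (by linarith)
  have e1 : α * (r - ℓ a) = 0 := by linarith
  have e2 : β * (r - ℓ b) = 0 := by linarith
  have e3 : γ * (r - ℓ c) = 0 := by linarith
  have m1 : α ≠ 0 → a ∈ τ := by
    intro h; apply ea; rcases mul_eq_zero.1 e1 with h' | h'; exact absurd h' h; linarith
  have m2 : β ≠ 0 → b ∈ τ := by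
    intro h; apply eb; rcases mul_eq_zero.1 e2 with h' | h'; exact absurd h' h; linarith
  have m3 : γ ≠ 0 → c ∈ τ := by
    intro h; apply ec; rcases mul_eq_zero.1 e3 with h' | h'; exact absurd h' h; linarith
  have hfil : ∀ i ∈ (Finset.univ : Finset (Fin 3)), ![α, β, γ] i • ![a, b, c] i ≠ 0 →
      ![α, β, γ] i ≠ 0 := by
    intro i _ h hw; apply h; rw [hw, zero_smul]
  have hmem := (convex_convexHull ℝ τ).sum_mem
    (t := Finset.univ.filter (fun i => ![α, β, γ] i ≠ 0)) (w := ![α, β, γ]) (z := ![a, b, c])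
    (by intro i _; fin_cases i <;> simpa)
    (by rw [Finset.sum_filter_of_ne (fun i _ h => h)]; simp [Fin.sum_univ_three]; linarith)
    (by intro i hi; simp only [Finset.mem_filter] at hi
        fin_cases i <;> simp only [Matrix.cons_val_zero, Matrix.cons_val_one, Matrix.head_cons] at hi ⊢
        · exact subset_convexHull ℝ τ (m1 hi.2)
        · exact subset_convexHull ℝ τ (m2 hi.2)
        · exact subset_convexHull ℝ τ (m3 hi.2))
  rw [Finset.sum_filter_of_ne hfil, Fin.sum_univ_three] at hmem
  simpa using hmem

/-- points of a convex hull satisfy a supporting inequality satisfied by generators -/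
lemma hull_le {s : Set E2} {ℓ : E2 →ᵃ[ℝ] ℝ} {r : ℝ} (h : ∀ v ∈ s, ℓ v ≤ r) :
    ∀ x ∈ convexHull ℝ s, ℓ x ≤ r := by
  intro x hx
  have : convexHull ℝ s ⊆ ℓ ⁻¹' Set.Iic r :=
    convexHull_min (fun v hv => h v hv) ((convex_Iic r).affine_preimage ℓ)
  exact this hx

lemma hull_ge {s : Set E2} {ℓ : E2 →ᵃ[ℝ] ℝ} {r : ℝ} (h : ∀ v ∈ s, r ≤ ℓ v) :
    ∀ x ∈ convexHull ℝ s, r ≤ ℓ x := by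
  intro x hx
  have : convexHull ℝ s ⊆ ℓ ⁻¹' Set.Ici r :=
    convexHull_min (fun v hv => h v hv) ((convex_Ici r).affine_preimage ℓ)
  exact this hx

/-- the set where a supporting functional attains its max is extreme -/
lemma isExtreme_level {A : Set E2} {ℓ : E2 →ᵃ[ℝ] ℝ} {r : ℝ} (h : ∀ x ∈ A, ℓ x ≤ r) :
    IsExtreme ℝ A {x ∈ A | ℓ x = r} := by
  constructor
  · exact Set.sep_subset _ _
  · rintro x1 hx1 x2 hx2 x ⟨hxA, hxr⟩ hseg
    obtain ⟨u, v, hu, hv, huv, hx⟩ := hseg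
    have hval : ℓ x = u * ℓ x1 + v * ℓ x2 := by
      rw [← hx]
      have := aff_comb3 ℓ u v 0 x1 x2 x2 (by linarith)
      simpa using this
    have l1 : ℓ x1 ≤ r := h _ hx1
    have l2 : ℓ x2 ≤ r := h _ hx2
    have e : u * (r - ℓ x1) + v * (r - ℓ x2) = 0 := by
      rw [hxr] at hval; linear_combination r * huv + hval
    have q1 : ℓ x1 = r := by
      by_contra hne
      have hlt : ℓ x1 < r := lt_of_le_of_ne l1 hne
      have : 0 < u * (r - ℓ x1) := mul_pos hu (by linarith)
      have : 0 ≤ v * (r - ℓ x2) := mul_nonneg hv.le (by linarith)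
      linarith
    have q2 : ℓ x2 = r := by
      by_contra hne
      have hlt : ℓ x2 < r := lt_of_le_of_ne l2 hne
      have : 0 < v * (r - ℓ x2) := mul_pos hv (by linarith)
      have : 0 ≤ u * (r - ℓ x1) := mul_nonneg hu.le (by linarith)
      linarith
    exact ⟨hx1, q1⟩

/-- master lemma: two triangles separated by a functional intersect in a common face -/
lemma pair_master {a b c a' b' c' : E2} (ℓ : E2 →ᵃ[ℝ] ℝ) (r : ℝ)
    (ha : ℓ a ≤ r) (hb : ℓ b ≤ r) (hc : ℓ c ≤ r)
    (ha' : r ≤ ℓ a') (hb' : r ≤ ℓ b') (hc' : r ≤ ℓ c')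
    (ea : ℓ a = r → a ∈ ({a', b', c'} : Set E2))
    (eb : ℓ b = r → b ∈ ({a', b', c'} : Set E2))
    (ec : ℓ c = r → c ∈ ({a', b', c'} : Set E2))
    (ea' : ℓ a' = r → a' ∈ ({a, b, c} : Set E2))
    (eb' : ℓ b' = r → b' ∈ ({a, b, c} : Set E2))
    (ec' : ℓ c' = r → c' ∈ ({a, b, c} : Set E2)) :
    IsExtreme ℝ (convexHull ℝ ({a, b, c} : Set E2))
      (convexHull ℝ ({a, b, c} : Set E2) ∩ convexHull ℝ ({a', b', c'} : Set E2)) ∧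
    IsExtreme ℝ (convexHull ℝ ({a', b', c'} : Set E2))
      (convexHull ℝ ({a, b, c} : Set E2) ∩ convexHull ℝ ({a', b', c'} : Set E2)) := by
  have hle : ∀ x ∈ convexHull ℝ ({a, b, c} : Set E2), ℓ x ≤ r :=
    hull_le (by rintro v (rfl | rfl | rfl) <;> assumption)
  have hge : ∀ x ∈ convexHull ℝ ({a', b', c'} : Set E2), r ≤ ℓ x :=
    hull_ge (by rintro v (rfl | rfl | rfl) <;> assumption)
  have key1 : convexHull ℝ ({a, b, c} : Set E2) ∩ convexHull ℝ ({a', b', c'} : Set E2) =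
      {x ∈ convexHull ℝ ({a, b, c} : Set E2) | ℓ x = r} := by
    ext x
    constructor
    · rintro ⟨h1, h2⟩
      exact ⟨h1, le_antisymm (hle x h1) (hge x h2)⟩
    · rintro ⟨h1, h2⟩
      refine ⟨h1, ?_⟩
      have := face_sub ha hb hc (τ := {a', b', c'}) ea eb ec x h1 h2
      exact convexHull_min (subset_convexHull ℝ _) (convex_convexHull ℝ _) this
  have key2 : convexHull ℝ ({a, b, c} : Set E2) ∩ convexHull ℝ ({a', b', c'} : Set E2) =
      {x ∈ convexHull ℝ ({a', b', c'} : Set E2) | (-ℓ) x = -r} := by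
    ext x
    constructor
    · rintro ⟨h1, h2⟩
      refine ⟨h2, ?_⟩
      have := le_antisymm (hle x h1) (hge x h2)
      simp [this]
    · rintro ⟨h1, h2⟩
      have h2' : ℓ x = r := by
        have : -(ℓ x) = -r := by simpa using h2
        linarith
      refine ⟨?_, h1⟩
      have := face_sub (ℓ := -ℓ) (r := -r)
        (by simpa using ha') (by simpa using hb') (by simpa using hc')
        (τ := {a, b, c})
        (fun h => ea' (neg_inj.mp (show -(ℓ a') = -r by simpa using h)))
        (fun h => eb' (neg_inj.mp (show -(ℓ b') = -r by simpa using h)))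
        (fun h => ec' (neg_inj.mp (show -(ℓ c') = -r by simpa using h)))
        x h1 (by simpa using h2)
      exact convexHull_min (subset_convexHull ℝ _) (convex_convexHull ℝ _) this
  constructor
  · rw [key1]; exact isExtreme_level hle
  · rw [key2]
    exact isExtreme_level (A := convexHull ℝ ({a', b', c'} : Set E2)) (ℓ := -ℓ) (r := -r)
      (fun x hx => by simpa using hge x hx)

lemma range_three {a b c : E2} : Set.range ![a, b, c] = {a, b, c} := by
  simp only [Matrix.range_cons, Matrix.range_empty, Set.union_empty, Set.union_singleton]
  ext z; simp [or_comm, or_left_comm]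

lemma tri_indep {a b c : E2}
    (h : (b 0 - a 0) * (c 1 - a 1) - (b 1 - a 1) * (c 0 - a 0) ≠ 0) :
    AffineIndependent ℝ ![a, b, c] := by
  rw [affineIndependent_iff_not_collinear]
  intro hcol
  rw [range_three] at hcol
  rw [collinear_iff_of_mem (Set.mem_insert a {b, c})] at hcol
  obtain ⟨v, hv⟩ := hcol
  obtain ⟨tb, htb⟩ := hv b (by simp)
  obtain ⟨tc, htc⟩ := hv c (by simp)
  apply h
  have hb0 : b 0 - a 0 = tb * v 0 := by rw [htb]; simp [Pi.add_apply]
  have hb1 : b 1 - a 1 = tb * v 1 := by rw [htb]; simp [Pi.add_apply]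
  have hc0 : c 0 - a 0 = tc * v 0 := by rw [htc]; simp [Pi.add_apply]
  have hc1 : c 1 - a 1 = tc * v 1 := by rw [htc]; simp [Pi.add_apply]
  rw [hb0, hb1, hc0, hc1]; ring

lemma tri_indep_set {a b c : E2}
    (h : (b 0 - a 0) * (c 1 - a 1) - (b 1 - a 1) * (c 0 - a 0) ≠ 0) :
    AffineIndependent ℝ ((↑) : ({a, b, c} : Set E2) → E2) := by
  have := (tri_indep h).range
  rwa [range_three] at this

lemma tri_span {a b c : E2}
    (h : (b 0 - a 0) * (c 1 - a 1) - (b 1 - a 1) * (c 0 - a 0) ≠ 0) :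
    affineSpan ℝ ({a, b, c} : Set E2) = ⊤ := by
  have hcard : Fintype.card (Fin 3) = Module.finrank ℝ E2 + 1 := by
    simp [Module.finrank_pi]
  have := (tri_indep h).affineSpan_eq_top_iff_card_eq_finrank_add_one.mpr hcard
  rwa [range_three] at this

lemma rel_quarter (g : E2 →ᵃ[ℝ] ℝ) {a b c d : E2} (h : d = (1/4 : ℝ) • (b - a) + c) :
    g d = g c + (g b - g a) / 4 := by
  have : d = ((1/4 : ℝ) • (b - a)) +ᵥ c := by simpa [vadd_eq_add] using h
  rw [this, AffineMap.map_vadd, map_smul]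
  have : g.linear (b - a) = g b - g a := by
    have := g.linearMap_vsub b a; simpa [vsub_eq_sub] using this
  rw [this]
  simp [vadd_eq_add, smul_eq_mul]
  ring

section MAIN

noncomputable abbrev mS1 : Set E2 := {![4,0], ![0,4], ![2,1]}
noncomputable abbrev mS2 : Set E2 := {![0,4], ![0,0], ![1,2]}
noncomputable abbrev mS3 : Set E2 := {![4,0], ![0,0], ![1,1]}
noncomputable abbrev mS4 : Set E2 := {![0,4], ![2,1], ![1,2]}
noncomputable abbrev mS5 : Set E2 := {![0,0], ![1,2], ![1,1]}
noncomputable abbrev mS6 : Set E2 := {![4,0], ![2,1], ![1,1]}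
noncomputable abbrev mS7 : Set E2 := {![2,1], ![1,2], ![1,1]}

lemma pair_swap {S S' : Set E2} (h : IsExtreme ℝ S (S ∩ S') ∧ IsExtreme ℝ S' (S ∩ S')) :
    IsExtreme ℝ S' (S' ∩ S) ∧ IsExtreme ℝ S (S' ∩ S) := by
  rw [Set.inter_comm]; exact ⟨h.2, h.1⟩

lemma pair_diag (S : Set E2) : IsExtreme ℝ S (S ∩ S) ∧ IsExtreme ℝ S (S ∩ S) := by
  rw [Set.inter_self]; exact ⟨IsExtreme.refl ℝ S, IsExtreme.refl ℝ S⟩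

lemma ev0 : moaePts 0 = ![4,0] := rfl
lemma ev1 : moaePts 1 = ![0,4] := rfl
lemma ev2 : moaePts 2 = ![0,0] := rfl
lemma ev3 : moaePts 3 = ![2,1] := rfl
lemma ev4 : moaePts 4 = ![1,2] := rfl
lemma ev5 : moaePts 5 = ![1,1] := rfl

/-- T₁ is a triangulation of the six-point configuration, and it is
not regular: no lifting function induces it. -/
theorem moae_T1_triangulation_not_regular :
    IsTriang 2 (Set.range moaePts) moaeT1 ∧
      ¬ ∃ w : (Fin 2 → ℝ) → ℝ, regularSubdiv 2 (Set.range moaePts) w = moaeT1 := by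
  have i1 : moaePts '' {0,1,3} = mS1 := by simp [Set.image_insert_eq, ev0, ev1, ev3]
  have i2 : moaePts '' {1,2,4} = mS2 := by simp [Set.image_insert_eq, ev1, ev2, ev4]
  have i3 : moaePts '' {0,2,5} = mS3 := by simp [Set.image_insert_eq, ev0, ev2, ev5]
  have i4 : moaePts '' {1,3,4} = mS4 := by simp [Set.image_insert_eq, ev1, ev3, ev4]
  have i5 : moaePts '' {2,4,5} = mS5 := by simp [Set.image_insert_eq, ev2, ev4, ev5]
  have i6 : moaePts '' {0,3,5} = mS6 := by simp [Set.image_insert_eq, ev0, ev3, ev5]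
  have i7 : moaePts '' {3,4,5} = mS7 := by simp [Set.image_insert_eq, ev3, ev4, ev5]
  have hT1 : moaeT1 = ({mS1, mS2, mS3, mS4, mS5, mS6, mS7} : Set (Set E2)) := by
    rw [moaeT1, i1, i2, i3, i4, i5, i6, i7]
  have m0 : (![4,0] : E2) ∈ Set.range moaePts := ⟨0, ev0⟩
  have m1 : (![0,4] : E2) ∈ Set.range moaePts := ⟨1, ev1⟩
  have m2 : (![0,0] : E2) ∈ Set.range moaePts := ⟨2, ev2⟩
  have m3 : (![2,1] : E2) ∈ Set.range moaePts := ⟨3, ev3⟩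
  have m4 : (![1,2] : E2) ∈ Set.range moaePts := ⟨4, ev4⟩
  have m5 : (![1,1] : E2) ∈ Set.range moaePts := ⟨5, ev5⟩
  have spanA : affineSpan ℝ (Set.range moaePts) = ⊤ := by
    apply le_antisymm le_top
    have h012 : affineSpan ℝ ({![4,0], ![0,4], ![0,0]} : Set E2) = ⊤ :=
      tri_span (by norm_num)
    rw [← h012]
    apply affineSpan_mono
    rintro v (rfl | rfl | rfl)
    exacts [m0, m1, m2]
  constructor
  · -- IsTriang
    refine ⟨?_, ?_, ?_⟩
    · -- condition 1
      intro σ hσ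
      rw [hT1] at hσ
      simp only [Set.mem_insert_iff, Set.mem_singleton_iff] at hσ
      rcases hσ with rfl | rfl | rfl | rfl | rfl | rfl | rfl <;>
        refine ⟨?_, tri_indep_set (by norm_num), by rw [spanA]; exact tri_span (by norm_num)⟩ <;>
        rintro v (rfl | rfl | rfl) <;>
        first
          | exact m0 | exact m1 | exact m2 | exact m3 | exact m4 | exact m5
    · -- condition 2 : pairwise faces
      have p12 := pair_swap <| pair_master (a := (![0,4] : E2)) (b := (![0,0] : E2)) (c := (![1,2] : E2)) (a' := (![4,0] : E2)) (b' := (![0,4] : E2)) (c' := (![2,1] : E2)) (aff 5 3 0) 12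
        (by norm_num) (by norm_num) (by norm_num) (by norm_num) (by norm_num) (by norm_num)
        (fun _ => by simp) (fun h => absurd h (by norm_num)) (fun h => absurd h (by norm_num)) (fun h => absurd h (by norm_num)) (fun _ => by simp) (fun h => absurd h (by norm_num))
      have p13 := pair_swap <| pair_master (a := (![4,0] : E2)) (b := (![0,0] : E2)) (c := (![1,1] : E2)) (a' := (![4,0] : E2)) (b' := (![0,4] : E2)) (c' := (![2,1] : E2)) (aff 2 5 0) 8
        (by norm_num) (by norm_num) (by norm_num) (by norm_num) (by norm_num) (by norm_num)
        (fun _ => by simp) (fun h => absurd h (by norm_num)) (fun h => absurd h (by norm_num)) (fun _ => by simp) (fun h => absurd h (by norm_num)) (fun h => absurd h (by norm_num))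
      have p14 := pair_swap <| pair_master (a := (![0,4] : E2)) (b := (![2,1] : E2)) (c := (![1,2] : E2)) (a' := (![4,0] : E2)) (b' := (![0,4] : E2)) (c' := (![2,1] : E2)) (aff 3 2 0) 8
        (by norm_num) (by norm_num) (by norm_num) (by norm_num) (by norm_num) (by norm_num)
        (fun _ => by simp) (fun _ => by simp) (fun h => absurd h (by norm_num)) (fun h => absurd h (by norm_num)) (fun _ => by simp) (fun _ => by simp)
      have p15 := pair_swap <| pair_master (a := (![0,0] : E2)) (b := (![1,2] : E2)) (c := (![1,1] : E2)) (a' := (![4,0] : E2)) (b' := (![0,4] : E2)) (c' := (![2,1] : E2)) (aff 3 2 0) (15/2)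
        (by norm_num) (by norm_num) (by norm_num) (by norm_num) (by norm_num) (by norm_num)
        (fun h => absurd h (by norm_num)) (fun h => absurd h (by norm_num)) (fun h => absurd h (by norm_num)) (fun h => absurd h (by norm_num)) (fun h => absurd h (by norm_num)) (fun h => absurd h (by norm_num))
      have p16 := pair_swap <| pair_master (a := (![4,0] : E2)) (b := (![2,1] : E2)) (c := (![1,1] : E2)) (a' := (![4,0] : E2)) (b' := (![0,4] : E2)) (c' := (![2,1] : E2)) (aff 1 2 0) 4
        (by norm_num) (by norm_num) (by norm_num) (by norm_num) (by norm_num) (by norm_num)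
        (fun _ => by simp) (fun _ => by simp) (fun h => absurd h (by norm_num)) (fun _ => by simp) (fun h => absurd h (by norm_num)) (fun _ => by simp)
      have p17 := pair_swap <| pair_master (a := (![2,1] : E2)) (b := (![1,2] : E2)) (c := (![1,1] : E2)) (a' := (![4,0] : E2)) (b' := (![0,4] : E2)) (c' := (![2,1] : E2)) (aff 4 3 0) 11
        (by norm_num) (by norm_num) (by norm_num) (by norm_num) (by norm_num) (by norm_num)
        (fun _ => by simp) (fun h => absurd h (by norm_num)) (fun h => absurd h (by norm_num)) (fun h => absurd h (by norm_num)) (fun h => absurd h (by norm_num)) (fun _ => by simp)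
      have p23 := pair_master (a := (![0,4] : E2)) (b := (![0,0] : E2)) (c := (![1,2] : E2)) (a' := (![4,0] : E2)) (b' := (![0,0] : E2)) (c' := (![1,1] : E2)) (aff 3 (-2) 0) 0
        (by norm_num) (by norm_num) (by norm_num) (by norm_num) (by norm_num) (by norm_num)
        (fun h => absurd h (by norm_num)) (fun _ => by simp) (fun h => absurd h (by norm_num)) (fun h => absurd h (by norm_num)) (fun _ => by simp) (fun h => absurd h (by norm_num))
      have p24 := pair_master (a := (![0,4] : E2)) (b := (![0,0] : E2)) (c := (![1,2] : E2)) (a' := (![0,4] : E2)) (b' := (![2,1] : E2)) (c' := (![1,2] : E2)) (aff 2 1 0) 4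
        (by norm_num) (by norm_num) (by norm_num) (by norm_num) (by norm_num) (by norm_num)
        (fun _ => by simp) (fun h => absurd h (by norm_num)) (fun _ => by simp) (fun _ => by simp) (fun h => absurd h (by norm_num)) (fun _ => by simp)
      have p25 := pair_master (a := (![0,4] : E2)) (b := (![0,0] : E2)) (c := (![1,2] : E2)) (a' := (![0,0] : E2)) (b' := (![1,2] : E2)) (c' := (![1,1] : E2)) (aff 2 (-1) 0) 0
        (by norm_num) (by norm_num) (by norm_num) (by norm_num) (by norm_num) (by norm_num)
        (fun h => absurd h (by norm_num)) (fun _ => by simp) (fun _ => by simp) (fun _ => by simp) (fun _ => by simp) (fun h => absurd h (by norm_num))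
      have p26 := pair_master (a := (![0,4] : E2)) (b := (![0,0] : E2)) (c := (![1,2] : E2)) (a' := (![4,0] : E2)) (b' := (![2,1] : E2)) (c' := (![1,1] : E2)) (aff 2 (-1) 0) (1/2)
        (by norm_num) (by norm_num) (by norm_num) (by norm_num) (by norm_num) (by norm_num)
        (fun h => absurd h (by norm_num)) (fun h => absurd h (by norm_num)) (fun h => absurd h (by norm_num)) (fun h => absurd h (by norm_num)) (fun h => absurd h (by norm_num)) (fun h => absurd h (by norm_num))
      have p27 := pair_master (a := (![0,4] : E2)) (b := (![0,0] : E2)) (c := (![1,2] : E2)) (a' := (![2,1] : E2)) (b' := (![1,2] : E2)) (c' := (![1,1] : E2)) (aff 3 (-1) 0) 1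
        (by norm_num) (by norm_num) (by norm_num) (by norm_num) (by norm_num) (by norm_num)
        (fun h => absurd h (by norm_num)) (fun h => absurd h (by norm_num)) (fun _ => by simp) (fun h => absurd h (by norm_num)) (fun _ => by simp) (fun h => absurd h (by norm_num))
      have p34 := pair_master (a := (![4,0] : E2)) (b := (![0,0] : E2)) (c := (![1,1] : E2)) (a' := (![0,4] : E2)) (b' := (![2,1] : E2)) (c' := (![1,2] : E2)) (aff 1 3 0) (9/2)
        (by norm_num) (by norm_num) (by norm_num) (by norm_num) (by norm_num) (by norm_num)
        (fun h => absurd h (by norm_num)) (fun h => absurd h (by norm_num)) (fun h => absurd h (by norm_num)) (fun h => absurd h (by norm_num)) (fun h => absurd h (by norm_num)) (fun h => absurd h (by norm_num))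
      have p35 := pair_swap <| pair_master (a := (![0,0] : E2)) (b := (![1,2] : E2)) (c := (![1,1] : E2)) (a' := (![4,0] : E2)) (b' := (![0,0] : E2)) (c' := (![1,1] : E2)) (aff 1 (-1) 0) 0
        (by norm_num) (by norm_num) (by norm_num) (by norm_num) (by norm_num) (by norm_num)
        (fun _ => by simp) (fun h => absurd h (by norm_num)) (fun _ => by simp) (fun h => absurd h (by norm_num)) (fun _ => by simp) (fun _ => by simp)
      have p36 := pair_master (a := (![4,0] : E2)) (b := (![0,0] : E2)) (c := (![1,1] : E2)) (a' := (![4,0] : E2)) (b' := (![2,1] : E2)) (c' := (![1,1] : E2)) (aff 1 3 0) 4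
        (by norm_num) (by norm_num) (by norm_num) (by norm_num) (by norm_num) (by norm_num)
        (fun _ => by simp) (fun h => absurd h (by norm_num)) (fun _ => by simp) (fun _ => by simp) (fun h => absurd h (by norm_num)) (fun _ => by simp)
      have p37 := pair_master (a := (![4,0] : E2)) (b := (![0,0] : E2)) (c := (![1,1] : E2)) (a' := (![2,1] : E2)) (b' := (![1,2] : E2)) (c' := (![1,1] : E2)) (aff 1 4 0) 5
        (by norm_num) (by norm_num) (by norm_num) (by norm_num) (by norm_num) (by norm_num)
        (fun h => absurd h (by norm_num)) (fun h => absurd h (by norm_num)) (fun _ => by simp) (fun h => absurd h (by norm_num)) (fun h => absurd h (by norm_num)) (fun _ => by simp)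
      have p45 := pair_swap <| pair_master (a := (![0,0] : E2)) (b := (![1,2] : E2)) (c := (![1,1] : E2)) (a' := (![0,4] : E2)) (b' := (![2,1] : E2)) (c' := (![1,2] : E2)) (aff 3 2 0) 7
        (by norm_num) (by norm_num) (by norm_num) (by norm_num) (by norm_num) (by norm_num)
        (fun h => absurd h (by norm_num)) (fun _ => by simp) (fun h => absurd h (by norm_num)) (fun h => absurd h (by norm_num)) (fun h => absurd h (by norm_num)) (fun _ => by simp)
      have p46 := pair_swap <| pair_master (a := (![4,0] : E2)) (b := (![2,1] : E2)) (c := (![1,1] : E2)) (a' := (![0,4] : E2)) (b' := (![2,1] : E2)) (c' := (![1,2] : E2)) (aff 1 3 0) 5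
        (by norm_num) (by norm_num) (by norm_num) (by norm_num) (by norm_num) (by norm_num)
        (fun h => absurd h (by norm_num)) (fun _ => by simp) (fun h => absurd h (by norm_num)) (fun h => absurd h (by norm_num)) (fun _ => by simp) (fun h => absurd h (by norm_num))
      have p47 := pair_swap <| pair_master (a := (![2,1] : E2)) (b := (![1,2] : E2)) (c := (![1,1] : E2)) (a' := (![0,4] : E2)) (b' := (![2,1] : E2)) (c' := (![1,2] : E2)) (aff 1 1 0) 3
        (by norm_num) (by norm_num) (by norm_num) (by norm_num) (by norm_num) (by norm_num)
        (fun _ => by simp) (fun _ => by simp) (fun h => absurd h (by norm_num)) (fun h => absurd h (by norm_num)) (fun _ => by simp) (fun _ => by simp)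
      have p56 := pair_master (a := (![0,0] : E2)) (b := (![1,2] : E2)) (c := (![1,1] : E2)) (a' := (![4,0] : E2)) (b' := (![2,1] : E2)) (c' := (![1,1] : E2)) (aff 2 (-1) 0) 1
        (by norm_num) (by norm_num) (by norm_num) (by norm_num) (by norm_num) (by norm_num)
        (fun h => absurd h (by norm_num)) (fun h => absurd h (by norm_num)) (fun _ => by simp) (fun h => absurd h (by norm_num)) (fun h => absurd h (by norm_num)) (fun _ => by simp)
      have p57 := pair_master (a := (![0,0] : E2)) (b := (![1,2] : E2)) (c := (![1,1] : E2)) (a' := (![2,1] : E2)) (b' := (![1,2] : E2)) (c' := (![1,1] : E2)) (aff 1 0 0) 1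
        (by norm_num) (by norm_num) (by norm_num) (by norm_num) (by norm_num) (by norm_num)
        (fun h => absurd h (by norm_num)) (fun _ => by simp) (fun _ => by simp) (fun h => absurd h (by norm_num)) (fun _ => by simp) (fun _ => by simp)
      have p67 := pair_master (a := (![4,0] : E2)) (b := (![2,1] : E2)) (c := (![1,1] : E2)) (a' := (![2,1] : E2)) (b' := (![1,2] : E2)) (c' := (![1,1] : E2)) (aff 0 1 0) 1
        (by norm_num) (by norm_num) (by norm_num) (by norm_num) (by norm_num) (by norm_num)
        (fun h => absurd h (by norm_num)) (fun _ => by simp) (fun _ => by simp) (fun _ => by simp) (fun h => absurd h (by norm_num)) (fun _ => by simp)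
      intro σ hσ σ' hσ'
      rw [hT1] at hσ hσ'
      simp only [Set.mem_insert_iff, Set.mem_singleton_iff] at hσ hσ'
      rcases hσ with rfl | rfl | rfl | rfl | rfl | rfl | rfl <;>
        rcases hσ' with rfl | rfl | rfl | rfl | rfl | rfl | rfl
      exacts [pair_diag (convexHull ℝ mS1), p12, p13, p14, p15, p16, p17,
        pair_swap p12, pair_diag (convexHull ℝ mS2), p23, p24, p25, p26, p27,
        pair_swap p13, pair_swap p23, pair_diag (convexHull ℝ mS3), p34, p35, p36, p37,
        pair_swap p14, pair_swap p24, pair_swap p34, pair_diag (convexHull ℝ mS4), p45, p46, p47,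
        pair_swap p15, pair_swap p25, pair_swap p35, pair_swap p45, pair_diag (convexHull ℝ mS5), p56, p57,
        pair_swap p16, pair_swap p26, pair_swap p36, pair_swap p46, pair_swap p56, pair_diag (convexHull ℝ mS6), p67,
        pair_swap p17, pair_swap p27, pair_swap p37, pair_swap p47, pair_swap p57, pair_swap p67, pair_diag (convexHull ℝ mS7)]
    · -- condition 3 : covering
      apply Set.Subset.antisymm
      · refine Set.iUnion₂_subset fun σ hσ => convexHull_mono ?_
        rw [hT1] at hσ
        simp only [Set.mem_insert_iff, Set.mem_singleton_iff] at hσ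
        rcases hσ with rfl | rfl | rfl | rfl | rfl | rfl | rfl <;>
          rintro v (rfl | rfl | rfl) <;>
          first
            | exact m0 | exact m1 | exact m2 | exact m3 | exact m4 | exact m5
      · intro x hx
        have hb0 : 0 ≤ x 0 := by
          have h := hull_le (ℓ := aff (-1) 0 0) (r := 0)
            (by rintro v ⟨i, rfl⟩
                fin_cases i <;> norm_num [moaePts]) x hx
          simp at h; linarith
        have hb1 : 0 ≤ x 1 := by
          have h := hull_le (ℓ := aff 0 (-1) 0) (r := 0)
            (by rintro v ⟨i, rfl⟩
                fin_cases i <;> norm_num [moaePts]) x hx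
          simp at h; linarith
        have hb2 : x 0 + x 1 ≤ 4 := by
          have h := hull_le (ℓ := aff 1 1 0) (r := 4)
            (by rintro v ⟨i, rfl⟩
                fin_cases i <;> norm_num [moaePts]) x hx
          simp at h; linarith
        rcases le_total 3 ((x 0) + (x 1)) with hI | hII
        · rcases le_total 4 (2*(x 0) + (x 1)) with hIa | hIb
          · rcases le_total 8 (3*(x 0) + 2*(x 1)) with h8 | h8
            · rcases le_total 4 ((x 0) + 2*(x 1)) with h4 | h4
              · -- s1
                refine Set.mem_biUnion (show mS1 ∈ moaeT1 by rw [hT1]; exact Set.mem_insert _ _) (mem_tri (a := (![4,0] : E2)) (b := ![0,4]) (c := ![2,1]) (α := (3*(x 0)+2*(x 1)-8)/4) (β := ((x 0)+2*(x 1)-4)/4) (γ := 4-(x 0)-(x 1)) (by linarith) (by linarith) (by linarith) (by ring) (by funext i; fin_cases i <;> (simp [Pi.add_apply, Pi.smul_apply, smul_eq_mul]; try ring)))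
              · rcases le_total 4 ((x 0) + 3*(x 1)) with h43 | h43
                · -- s6
                  refine Set.mem_biUnion (show mS6 ∈ moaeT1 by rw [hT1]; exact Set.mem_insert_iff.mpr (Or.inr (Set.mem_insert_iff.mpr (Or.inr (Set.mem_insert_iff.mpr (Or.inr (Set.mem_insert_iff.mpr (Or.inr (Set.mem_insert_iff.mpr (Or.inr (Set.mem_insert _ _))))))))))) (mem_tri (a := (![4,0] : E2)) (b := ![2,1]) (c := ![1,1]) (α := 1-(x 1)) (β := (x 0)+3*(x 1)-4) (γ := 4-(x 0)-2*(x 1)) (by linarith) (by linarith) (by linarith) (by ring) (by funext i; fin_cases i <;> (simp [Pi.add_apply, Pi.smul_apply, smul_eq_mul]; try ring)))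
                · -- s3
                  refine Set.mem_biUnion (show mS3 ∈ moaeT1 by rw [hT1]; exact Set.mem_insert_iff.mpr (Or.inr (Set.mem_insert_iff.mpr (Or.inr (Set.mem_insert _ _))))) (mem_tri (a := (![4,0] : E2)) (b := ![0,0]) (c := ![1,1]) (α := ((x 0)-(x 1))/4) (β := (4-(x 0)-3*(x 1))/4) (γ := (x 1)) (by linarith) (by linarith) (by linarith) (by ring) (by funext i; fin_cases i <;> (simp [Pi.add_apply, Pi.smul_apply, smul_eq_mul]; try ring)))
            · -- s4
              refine Set.mem_biUnion (show mS4 ∈ moaeT1 by rw [hT1]; exact Set.mem_insert_iff.mpr (Or.inr (Set.mem_insert_iff.mpr (Or.inr (Set.mem_insert_iff.mpr (Or.inr (Set.mem_insert _ _))))))) (mem_tri (a := (![0,4] : E2)) (b := ![2,1]) (c := ![1,2]) (α := (x 0)+(x 1)-3) (β := 2*(x 0)+(x 1)-4) (γ := 8-3*(x 0)-2*(x 1)) (by linarith) (by linarith) (by linarith) (by ring) (by funext i; fin_cases i <;> (simp [Pi.add_apply, Pi.smul_apply, smul_eq_mul]; try ring)))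
          · -- s2
            refine Set.mem_biUnion (show mS2 ∈ moaeT1 by rw [hT1]; exact Set.mem_insert_iff.mpr (Or.inr (Set.mem_insert _ _))) (mem_tri (a := (![0,4] : E2)) (b := ![0,0]) (c := ![1,2]) (α := ((x 1)-2*(x 0))/4) (β := (4-2*(x 0)-(x 1))/4) (γ := (x 0)) (by linarith) (by linarith) (by linarith) (by ring) (by funext i; fin_cases i <;> (simp [Pi.add_apply, Pi.smul_apply, smul_eq_mul]; try ring)))
        · rcases le_total (x 0) 1 with hs1 | hs1
          · rcases le_total (x 1) (x 0) with hts | hts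
            · -- s3
              refine Set.mem_biUnion (show mS3 ∈ moaeT1 by rw [hT1]; exact Set.mem_insert_iff.mpr (Or.inr (Set.mem_insert_iff.mpr (Or.inr (Set.mem_insert _ _))))) (mem_tri (a := (![4,0] : E2)) (b := ![0,0]) (c := ![1,1]) (α := ((x 0)-(x 1))/4) (β := (4-(x 0)-3*(x 1))/4) (γ := (x 1)) (by linarith) (by linarith) (by linarith) (by ring) (by funext i; fin_cases i <;> (simp [Pi.add_apply, Pi.smul_apply, smul_eq_mul]; try ring)))
            · rcases le_total (x 1) (2*(x 0)) with ht2 | ht2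
              · -- s5
                refine Set.mem_biUnion (show mS5 ∈ moaeT1 by rw [hT1]; exact Set.mem_insert_iff.mpr (Or.inr (Set.mem_insert_iff.mpr (Or.inr (Set.mem_insert_iff.mpr (Or.inr (Set.mem_insert_iff.mpr (Or.inr (Set.mem_insert _ _))))))))) (mem_tri (a := (![0,0] : E2)) (b := ![1,2]) (c := ![1,1]) (α := 1-(x 0)) (β := (x 1)-(x 0)) (γ := 2*(x 0)-(x 1)) (by linarith) (by linarith) (by linarith) (by ring) (by funext i; fin_cases i <;> (simp [Pi.add_apply, Pi.smul_apply, smul_eq_mul]; try ring)))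
              · -- s2
                refine Set.mem_biUnion (show mS2 ∈ moaeT1 by rw [hT1]; exact Set.mem_insert_iff.mpr (Or.inr (Set.mem_insert _ _))) (mem_tri (a := (![0,4] : E2)) (b := ![0,0]) (c := ![1,2]) (α := ((x 1)-2*(x 0))/4) (β := (4-2*(x 0)-(x 1))/4) (γ := (x 0)) (by linarith) (by linarith) (by linarith) (by ring) (by funext i; fin_cases i <;> (simp [Pi.add_apply, Pi.smul_apply, smul_eq_mul]; try ring)))
          · rcases le_total 1 (x 1) with ht1 | ht1
            · -- s7
              refine Set.mem_biUnion (show mS7 ∈ moaeT1 by rw [hT1]; exact Set.mem_insert_iff.mpr (Or.inr (Set.mem_insert_iff.mpr (Or.inr (Set.mem_insert_iff.mpr (Or.inr (Set.mem_insert_iff.mpr (Or.inr (Set.mem_insert_iff.mpr (Or.inr (Set.mem_insert_iff.mpr (Or.inr (Set.mem_singleton _))))))))))))) (mem_tri (a := (![2,1] : E2)) (b := ![1,2]) (c := ![1,1]) (α := (x 0)-1) (β := (x 1)-1) (γ := 3-(x 0)-(x 1)) (by linarith) (by linarith) (by linarith) (by ring) (by funext i; fin_cases i <;> (simp [Pi.add_apply,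 Pi.smul_apply, smul_eq_mul]; try ring)))
            · rcases le_total ((x 0) + 3*(x 1)) 4 with h43 | h43
              · -- s3
                refine Set.mem_biUnion (show mS3 ∈ moaeT1 by rw [hT1]; exact Set.mem_insert_iff.mpr (Or.inr (Set.mem_insert_iff.mpr (Or.inr (Set.mem_insert _ _))))) (mem_tri (a := (![4,0] : E2)) (b := ![0,0]) (c := ![1,1]) (α := ((x 0)-(x 1))/4) (β := (4-(x 0)-3*(x 1))/4) (γ := (x 1)) (by linarith) (by linarith) (by linarith) (by ring) (by funext i; fin_cases i <;> (simp [Pi.add_apply, Pi.smul_apply, smul_eq_mul]; try ring)))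
              · -- s6
                refine Set.mem_biUnion (show mS6 ∈ moaeT1 by rw [hT1]; exact Set.mem_insert_iff.mpr (Or.inr (Set.mem_insert_iff.mpr (Or.inr (Set.mem_insert_iff.mpr (Or.inr (Set.mem_insert_iff.mpr (Or.inr (Set.mem_insert_iff.mpr (Or.inr (Set.mem_insert _ _))))))))))) (mem_tri (a := (![4,0] : E2)) (b := ![2,1]) (c := ![1,1]) (α := 1-(x 1)) (β := (x 0)+3*(x 1)-4) (γ := 4-(x 0)-2*(x 1)) (by linarith) (by linarith) (by linarith) (by ring) (by funext i; fin_cases i <;> (simp [Pi.add_apply, Pi.smul_apply, smul_eq_mul]; try ring)))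
  · -- non-regularity
    rintro ⟨w, hw⟩
    have hmem : ∀ σ ∈ moaeT1, ∃ f : E2 →ᵃ[ℝ] ℝ,
        (∀ a ∈ Set.range moaePts, f a ≤ w a) ∧ σ = {a ∈ Set.range moaePts | f a = w a} := by
      intro σ hσ
      rw [← hw] at hσ
      obtain ⟨f, h1, h2, -⟩ := hσ
      exact ⟨f, h1, h2⟩
    obtain ⟨f, hfle, hfeq⟩ := hmem (moaePts '' {3,4,5}) (by rw [i7, hT1]; exact Set.mem_insert_iff.mpr (Or.inr (Set.mem_insert_iff.mpr (Or.inr (Set.mem_insert_iff.mpr (Or.inr (Set.mem_insert_iff.mpr (Or.inr (Set.mem_insert_iff.mpr (Or.inr (Set.mem_insert_iff.mpr (Or.inr (Set.mem_singleton _)))))))))))))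
    obtain ⟨g1, hg1le, hg1eq⟩ := hmem (moaePts '' {0,1,3}) (by rw [i1, hT1]; exact Set.mem_insert _ _)
    obtain ⟨g2, hg2le, hg2eq⟩ := hmem (moaePts '' {1,2,4}) (by rw [i2, hT1]; exact Set.mem_insert_iff.mpr (Or.inr (Set.mem_insert _ _)))
    obtain ⟨g3, hg3le, hg3eq⟩ := hmem (moaePts '' {0,2,5}) (by rw [i3, hT1]; exact Set.mem_insert_iff.mpr (Or.inr (Set.mem_insert_iff.mpr (Or.inr (Set.mem_insert _ _)))))
    rw [i7] at hfeq; rw [i1] at hg1eq; rw [i2] at hg2eq; rw [i3] at hg3eq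
    -- equalities from membership
    have ef3 : f ![2,1] = w ![2,1] := (hfeq ▸ (by simp : (![2,1]:E2) ∈ mS7)).2
    have ef4 : f ![1,2] = w ![1,2] := (hfeq ▸ (by simp : (![1,2]:E2) ∈ mS7)).2
    have ef5 : f ![1,1] = w ![1,1] := (hfeq ▸ (by simp : (![1,1]:E2) ∈ mS7)).2
    have ea0 : g1 ![4,0] = w ![4,0] := (hg1eq ▸ (by simp : (![4,0]:E2) ∈ mS1)).2
    have ea1 : g1 ![0,4] = w ![0,4] := (hg1eq ▸ (by simp : (![0,4]:E2) ∈ mS1)).2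
    have ea3 : g1 ![2,1] = w ![2,1] := (hg1eq ▸ (by simp : (![2,1]:E2) ∈ mS1)).2
    have eb1 : g2 ![0,4] = w ![0,4] := (hg2eq ▸ (by simp : (![0,4]:E2) ∈ mS2)).2
    have eb2 : g2 ![0,0] = w ![0,0] := (hg2eq ▸ (by simp : (![0,0]:E2) ∈ mS2)).2
    have eb4 : g2 ![1,2] = w ![1,2] := (hg2eq ▸ (by simp : (![1,2]:E2) ∈ mS2)).2
    have ec0 : g3 ![4,0] = w ![4,0] := (hg3eq ▸ (by simp : (![4,0]:E2) ∈ mS3)).2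
    have ec2 : g3 ![0,0] = w ![0,0] := (hg3eq ▸ (by simp : (![0,0]:E2) ∈ mS3)).2
    have ec5 : g3 ![1,1] = w ![1,1] := (hg3eq ▸ (by simp : (![1,1]:E2) ∈ mS3)).2
    -- strict inequalities at excluded points
    have ne14 : (![1,2] : E2) ∉ mS1 := by
      intro h
      rcases h with h | h | h <;> · have h0 := congrFun h 0; have h1 := congrFun h 1; norm_num at h0 <;> norm_num at h1
    have ne25 : (![1,1] : E2) ∉ mS2 := by
      intro h
      rcases h with h | h | h <;> · have h0 := congrFun h 0; have h1 := congrFun h 1; norm_num at h0 <;> norm_num at h1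
    have ne33 : (![2,1] : E2) ∉ mS3 := by
      intro h
      rcases h with h | h | h <;> · have h0 := congrFun h 0; have h1 := congrFun h 1; norm_num at h0 <;> norm_num at h1
    have sa4 : g1 ![1,2] < w ![1,2] := by
      rcases lt_or_eq_of_le (hg1le _ m4) with h | h
      · exact h
      · exact absurd (hg1eq ▸ (⟨m4, h⟩ : (![1,2]:E2) ∈ {a ∈ Set.range moaePts | g1 a = w a})) ne14
    have sb5 : g2 ![1,1] < w ![1,1] := by
      rcases lt_or_eq_of_le (hg2le _ m5) with h | h
      · exact h
      · exact absurd (hg2eq ▸ (⟨m5, h⟩ : (![1,1]:E2) ∈ {a ∈ Set.range moaePts | g2 a = w a})) ne25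
    have sc3 : g3 ![2,1] < w ![2,1] := by
      rcases lt_or_eq_of_le (hg3le _ m3) with h | h
      · exact h
      · exact absurd (hg3eq ▸ (⟨m3, h⟩ : (![2,1]:E2) ∈ {a ∈ Set.range moaePts | g3 a = w a})) ne33
    -- affine relations
    have r1 : ∀ g : E2 →ᵃ[ℝ] ℝ, g ![1,2] = g ![2,1] + (g ![0,4] - g ![4,0]) / 4 := fun g =>
      rel_quarter g (by funext i; fin_cases i <;> norm_num)
    have r2 : ∀ g : E2 →ᵃ[ℝ] ℝ, g ![1,1] = g ![1,2] + (g ![0,0] - g ![0,4]) / 4 := fun g =>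
      rel_quarter g (by funext i; fin_cases i <;> norm_num)
    have r3 : ∀ g : E2 →ᵃ[ℝ] ℝ, g ![2,1] = g ![1,1] + (g ![4,0] - g ![0,0]) / 4 := fun g =>
      rel_quarter g (by funext i; fin_cases i <;> norm_num)
    have hf1 := r1 f
    have hf2 := r2 f
    have hf3 := r3 f
    have hg1r := r1 g1
    have hg2r := r2 g2
    have hg3r := r3 g3
    linarith

end MAIN
end
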